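/- Let $(X,\mu,T)$ be ergodic, $\epsilon > 0$ small enough, and $\Omega \subset X$ measurable with $\mu(\Omega) > 1 - \epsilon/4$. Then there exist a measurable set $\Omega_0 \subseteq \Omega$ with $\mu(\Omega_0) > 1-\epsilon$ and an integer $n_0$ such that for every $x \in \Omega_0$ there is an $\epsilon$-doubling sequence of integers $\{m_i\}_{i\geq 0}$ with $m_0 = n_0$ and $T^{m_i} x \in \Omega$ for all $i \geq 0$. -/

import Mathlib

open MeasureTheory Filter Topology
open scoped ENNReal

noncomputable section

/-!
Since `μ Ωᶜ < ε/4`, the upper half of Birkhoff's theorem (a consequence of the maximal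
ergodic theorem and ergodicity) shows that for a.e. `x` the number of `k < n` with `T^k x ∉ Ω` is
eventually at most `εn/3`, and by continuity of measure this holds for all `n ≥ N` off a set of
measure `< ε/4`. For such `x` and `m ≥ N`, the `⌈εm⌉` integers in `[2m, 2m + εm)` cannot all be
bad times, since they alone would exceed the allowed `ε(2m + ⌈εm⌉)/3` bad times below
`2m + ⌈εm⌉`. Starting from `n₀ = max N 1` with `T^{n₀} x ∈ Ω` and repeatedly choosing a good
time in `[2m, 2m + εm)` gives the `ε`-doubling sequence.
-/

lemma exists_doubling_seq {p : ℕ → Prop} {ε : ℝ} {n₀ : ℕ} (hε : 0 ≤ ε) (h₀ : p n₀)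
    (hstep : ∀ m, p m → ∃ k, p k ∧ 2 * m ≤ k ∧ (k : ℝ) < 2 * m + ε * m) :
    ∃ u : ℕ → ℕ, u 0 = n₀ ∧ (∀ i, |(u (i + 1) : ℝ) - 2 * u i| < ε * u (i + 1)) ∧
      ∀ i, p (u i) := by
  choose! next hp h2 hlt using hstep
  have hpu : ∀ i, p (next^[i] n₀) := fun i => by
    induction i with
    | zero => exact h₀
    | succ i ih => rw [Function.iterate_succ_apply']; exact hp _ ih
  refine ⟨fun i => next^[i] n₀, rfl, fun i => ?_, hpu⟩
  simp only [Function.iterate_succ_apply']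
  set m := next^[i] n₀
  have h2m : (2 * m : ℝ) ≤ next m := mod_cast h2 m (hpu i)
  rw [abs_of_nonneg (by linarith)]
  nlinarith [hlt m (hpu i)]

section BirkhoffSum

variable {α : Type*} {f : α → α} {g : α → ℝ}

def maxBirkhoffSum (f : α → α) (g : α → ℝ) (N : ℕ) : α → ℝ :=
  (Finset.range (N + 1)).sup' Finset.nonempty_range_add_one (birkhoffSum f g)

lemma birkhoffSum_le_maxBirkhoffSum {n N : ℕ} (h : n ≤ N) (x : α) :
    birkhoffSum f g n x ≤ maxBirkhoffSum f g N x := by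
  rw [maxBirkhoffSum, Finset.sup'_apply]
  exact Finset.le_sup' (fun n => birkhoffSum f g n x) (Finset.mem_range_succ_iff.2 h)

lemma maxBirkhoffSum_nonneg (N : ℕ) (x : α) : 0 ≤ maxBirkhoffSum f g N x :=
  birkhoffSum_zero f g x ▸ birkhoffSum_le_maxBirkhoffSum N.zero_le x

lemma maxBirkhoffSum_pos_iff {N : ℕ} {x : α} :
    0 < maxBirkhoffSum f g N x ↔ ∃ n ≤ N, 0 < birkhoffSum f g n x := by
  simp [maxBirkhoffSum, Finset.sup'_apply, Finset.lt_sup'_iff]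

lemma maxBirkhoffSum_le_add_maxBirkhoffSum_apply {N : ℕ} {x : α}
    (hx : 0 < maxBirkhoffSum f g N x) :
    maxBirkhoffSum f g N x ≤ g x + maxBirkhoffSum f g N (f x) := by
  obtain ⟨n, hn, hmax⟩ := Finset.exists_mem_eq_sup' Finset.nonempty_range_add_one
    (fun n => birkhoffSum f g n x)
  rw [maxBirkhoffSum, Finset.sup'_apply, hmax] at hx ⊢
  obtain _ | m := n
  · simp at hx
  · rw [birkhoffSum_succ']
    gcongr
    exact birkhoffSum_le_maxBirkhoffSum (by simp at hn; omega) _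

lemma birkhoffSum_sub_const (c : ℝ) (n : ℕ) (x : α) :
    birkhoffSum f (fun x => g x - c) n x = birkhoffSum f g n x - n * c := by
  simp [birkhoffSum, Finset.sum_sub_distrib]

lemma eventually_birkhoffSum_apply_le {x : α} {a b : ℝ} (hab : a < b)
    (h : ∀ᶠ n in atTop, birkhoffSum f g n x ≤ a * n) :
    ∀ᶠ n in atTop, birkhoffSum f g n (f x) ≤ b * n := by
  filter_upwards [(tendsto_add_atTop_nat 1).eventually h,
    (tendsto_natCast_atTop_atTop.const_mul_atTop (sub_pos.2 hab)).eventually_ge_atTop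
      (a - g x)] with n hn hbn
  rw [birkhoffSum_succ'] at hn
  push_cast at hn
  linarith

lemma exists_iterate_mem_near_two_mul {s : Set α} {x : α} {N m : ℕ} {ε ρ : ℝ} (hε : 0 < ε)
    (hρ : ρ * (2 + ε) < ε) (hx : ∀ n ≥ N, birkhoffSum f (sᶜ.indicator 1) n x ≤ ρ * n)
    (hNm : N ≤ m) (hm : 0 < m) :
    ∃ k, f^[k] x ∈ s ∧ 2 * m ≤ k ∧ (k : ℝ) < 2 * m + ε * m := by
  set w := ⌈ε * m⌉₊
  have hεm : 0 < ε * m := by positivity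
  have hw : ε * m ≤ w := Nat.le_ceil _
  have hw' : (w : ℝ) < ε * m + 1 := Nat.ceil_lt_add_one hεm.le
  by_contra! hgap
  have hmiss : ∀ j < w, f^[j] (f^[2 * m] x) ∉ s := fun j hj hs => by
    rw [← Function.iterate_add_apply] at hs
    have := hgap _ hs (by omega)
    have : (j : ℝ) + 1 ≤ w := mod_cast hj
    push_cast at *
    linarith
  have hcount : (w : ℝ) ≤ birkhoffSum f (sᶜ.indicator 1) (2 * m + w) x := by
    rw [birkhoffSum_add]
    have hS : birkhoffSum f (sᶜ.indicator 1) w (f^[2 * m] x) = (w : ℝ) := by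
      rw [birkhoffSum, Finset.sum_congr rfl fun j hj =>
        Set.indicator_of_mem (hmiss j (Finset.mem_range.1 hj)) _]
      simp
    have : 0 ≤ birkhoffSum f (sᶜ.indicator (1 : α → ℝ)) (2 * m) x :=
      Finset.sum_nonneg fun _ _ => Set.indicator_nonneg (fun _ _ => zero_le_one) _
    linarith
  have := hcount.trans (hx _ (by omega))
  push_cast at this
  nlinarith

lemma exists_doubling_seq_iterate_mem {s : Set α} {x : α} {N n₀ : ℕ} {ε ρ : ℝ} (hε : 0 < ε)
    (hρ : ρ * (2 + ε) < ε) (hx : ∀ n ≥ N, birkhoffSum f (sᶜ.indicator 1) n x ≤ ρ * n)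
    (hN : N ≤ n₀) (hn₀ : 0 < n₀) (hx₀ : f^[n₀] x ∈ s) :
    ∃ u : ℕ → ℕ, u 0 = n₀ ∧ (∀ i, |(u (i + 1) : ℝ) - 2 * u i| < ε * u (i + 1)) ∧
      ∀ i, f^[u i] x ∈ s := by
  obtain ⟨u, hu0, hu, hpu⟩ := exists_doubling_seq (p := fun m => n₀ ≤ m ∧ f^[m] x ∈ s)
    hε.le ⟨le_rfl, hx₀⟩ <| by
      rintro m ⟨hm, -⟩
      obtain ⟨k, hk, h2k, hk'⟩ := exists_iterate_mem_near_two_mul hε hρ hx (hN.trans hm) (by omega)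
      exact ⟨k, ⟨by omega, hk⟩, h2k, hk'⟩
  exact ⟨u, hu0, hu, fun i => (hpu i).2⟩

end BirkhoffSum

namespace MeasureTheory.MeasurePreserving

variable {α : Type*} [MeasurableSpace α] {μ : Measure α} {f : α → α} {g : α → ℝ}

lemma integrable_birkhoffSum (hf : MeasurePreserving f μ μ)
    (hg : Integrable g μ) (n : ℕ) : Integrable (birkhoffSum f g n) μ := by
  unfold birkhoffSum
  exact integrable_finsetSum _ fun k _ => (hf.iterate k).integrable_comp_of_integrable hg

lemma integrable_maxBirkhoffSum (hf : MeasurePreserving f μ μ)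
    (hg : Integrable g μ) (N : ℕ) : Integrable (maxBirkhoffSum f g N) μ :=
  Finset.sup'_induction (p := (Integrable · μ)) _ _ (fun _ h₁ _ h₂ => h₁.sup h₂)
    fun n _ => hf.integrable_birkhoffSum hg n

/-- Garsia's proof: on `E = {0 < M}` one has `M ≤ g + M ∘ f`, while `M` vanishes off `E`. -/
lemma setIntegral_maxBirkhoffSum_pos_nonneg (hf : MeasurePreserving f μ μ)
    (hg : Integrable g μ) (N : ℕ) :
    0 ≤ ∫ x in {x | 0 < maxBirkhoffSum f g N x}, g x ∂μ := by
  set M := maxBirkhoffSum f g N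
  have hM : Integrable M μ := hf.integrable_maxBirkhoffSum hg N
  have hMf : Integrable (M ∘ f) μ := hf.integrable_comp_of_integrable hM
  have hE : NullMeasurableSet {x | 0 < M x} μ :=
    nullMeasurableSet_lt aemeasurable_const hM.aemeasurable
  have hMf_eq : ∫ x, M (f x) ∂μ = ∫ x, M x ∂μ := by
    conv_rhs => rw [← hf.map_eq]
    exact (integral_map hf.aemeasurable (hf.map_eq.symm ▸ hM.aestronglyMeasurable)).symm
  have hM_restrict : ∫ x in {x | 0 < M x}, M x ∂μ = ∫ x, M x ∂μ :=
    setIntegral_eq_integral_of_forall_compl_eq_zero fun x hx =>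
      le_antisymm (not_lt.1 hx) (maxBirkhoffSum_nonneg N x)
  calc (0 : ℝ) = ∫ x in {x | 0 < M x}, M x ∂μ - ∫ x, M (f x) ∂μ := by
        rw [hM_restrict, hMf_eq, sub_self]
    _ ≤ ∫ x in {x | 0 < M x}, M x ∂μ - ∫ x in {x | 0 < M x}, M (f x) ∂μ := by
        exact sub_le_sub_left (setIntegral_le_integral hMf
          (ae_of_all _ fun x => maxBirkhoffSum_nonneg N (f x))) _
    _ = ∫ x in {x | 0 < M x}, (M x - M (f x)) ∂μ :=
        (integral_sub hM.integrableOn hMf.integrableOn).symm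
    _ ≤ ∫ x in {x | 0 < M x}, g x ∂μ :=
        setIntegral_mono_on₀ (hM.sub hMf).integrableOn hg.integrableOn hE fun x hx => by
          linarith [maxBirkhoffSum_le_add_maxBirkhoffSum_apply (f := f) (g := g) hx]

/-- The maximal ergodic theorem. -/
theorem setIntegral_exists_birkhoffSum_pos_nonneg
    (hf : MeasurePreserving f μ μ) (hg : Integrable g μ) :
    0 ≤ ∫ x in {x | ∃ n, 0 < birkhoffSum f g n x}, g x ∂μ := by
  have hE : {x | ∃ n, 0 < birkhoffSum f g n x} = ⋃ N, {x | 0 < maxBirkhoffSum f g N x} := by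
    ext x
    simp only [Set.mem_ofPred_eq, Set.mem_iUnion, maxBirkhoffSum_pos_iff]
    exact ⟨fun ⟨n, hn⟩ => ⟨n, n, le_rfl, hn⟩, fun ⟨_, n, _, hn⟩ => ⟨n, hn⟩⟩
  rw [hE]
  refine ge_of_tendsto' (tendsto_setIntegral_of_monotone₀ (fun N => ?_) (fun N N' h x hx => ?_)
    hg.integrableOn) (hf.setIntegral_maxBirkhoffSum_pos_nonneg hg)
  · exact nullMeasurableSet_lt aemeasurable_const
      (hf.integrable_maxBirkhoffSum hg N).aemeasurable
  · obtain ⟨n, hn, hpos⟩ := maxBirkhoffSum_pos_iff.1 hx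
    exact maxBirkhoffSum_pos_iff.2 ⟨n, hn.trans h, hpos⟩

end MeasureTheory.MeasurePreserving

section Ergodic

variable {α : Type*} [MeasurableSpace α] {μ : Measure α} {f : α → α} {g : α → ℝ}

lemma nullMeasurableSet_setOf_eventually_atTop {p : ℕ → α → Prop}
    (hp : ∀ n, NullMeasurableSet {x | p n x} μ) :
    NullMeasurableSet {x | ∀ᶠ n in atTop, p n x} μ := by
  simp only [eventually_atTop, Set.ofPred_exists, Set.ofPred_forall]
  exact .iUnion fun N => .iInter fun n => .iInter fun _ => hp n

/-- The upper bound in Birkhoff's pointwise ergodic theorem. -/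
theorem Ergodic.ae_eventually_birkhoffSum_le [IsProbabilityMeasure μ] (hf : Ergodic f μ)
    (hg : Integrable g μ) {c : ℝ} (hc : ∫ x, g x ∂μ < c) :
    ∀ᵐ x ∂μ, ∀ᶠ n in atTop, birkhoffSum f g n x ≤ c * n := by
  obtain ⟨c', hgc', hc'c⟩ := exists_between hc
  set H := {x | ∀ q : ℚ, c' < q → ∀ᶠ n in atTop, birkhoffSum f g n x ≤ q * n}
  have hH : NullMeasurableSet H μ := by
    simp only [H, Set.ofPred_forall]
    exact .iInter fun q => .iInter fun _ => nullMeasurableSet_setOf_eventually_atTop fun n =>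
      nullMeasurableSet_le (hf.toMeasurePreserving.integrable_birkhoffSum hg n).aemeasurable
        aemeasurable_const
  have hH_inv : H ⊆ f ⁻¹' H := fun x hx q hq => by
    obtain ⟨q', hcq', hq'q⟩ := exists_rat_btwn hq
    exact eventually_birkhoffSum_apply_le (mod_cast hq'q) (hx q' hcq')
  -- `H = {limsup S_n / n ≤ c'}` is invariant; were it null, the maximal ergodic theorem for
  -- `g - c'` would give `∫ g ≥ c'`.
  rcases hf.ae_empty_or_univ_of_ae_le_preimage hH hH_inv.eventuallyLE with hH0 | hH1
  · set E := {x | ∃ n, 0 < birkhoffSum f (fun x => g x - c') n x}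
    have hHE : Hᶜ ⊆ E := fun x hx => by
      simp only [H, Set.mem_compl_iff, Set.mem_ofPred_eq, not_forall, not_eventually,
        not_le] at hx
      obtain ⟨q, hq, hfreq⟩ := hx
      obtain ⟨n, hn⟩ := hfreq.exists
      have : c' * n ≤ q * n := by gcongr
      exact ⟨n, by rw [birkhoffSum_sub_const]; linarith⟩
    have hE : ∀ᵐ x ∂μ, x ∈ E :=
      measure_mono_null (Set.compl_subset_comm.1 hHE) (ae_eq_empty.1 hH0)
    have hmax := hf.toMeasurePreserving.setIntegral_exists_birkhoffSum_pos_nonneg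
      (g := fun x => g x - c') (hg.sub (integrable_const c'))
    rw [Measure.restrict_eq_self_of_ae_mem hE, integral_sub hg (integrable_const c')] at hmax
    simp only [integral_const, probReal_univ, smul_eq_mul, one_mul] at hmax
    linarith
  · obtain ⟨q, hc'q, hqc⟩ := exists_rat_btwn hc'c
    filter_upwards [(ae_eq_univ.1 hH1 : ∀ᵐ x ∂μ, x ∈ H)] with x hx
    filter_upwards [hx q hc'q] with n hn
    exact hn.trans (by gcongr)

end Ergodic

section

variable {α : Type*} [MeasurableSpace α] {μ : Measure α}

lemma Measurable.birkhoffSum {f : α → α} {g : α → ℝ} (hf : Measurable f) (hg : Measurable g)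
    (n : ℕ) : Measurable (birkhoffSum f g n) :=
  Finset.measurable_sum _ fun k _ => hg.comp (hf.iterate k)

lemma MeasurableSet.setOf_forall_ge {p : ℕ → α → Prop} (hp : ∀ n, MeasurableSet {x | p n x})
    (N : ℕ) : MeasurableSet {x | ∀ n ≥ N, p n x} := by
  simp only [Set.ofPred_forall]
  exact .iInter fun n => .iInter fun _ => hp n

lemma exists_measure_compl_setOf_forall_ge_lt [IsFiniteMeasure μ] {p : ℕ → α → Prop}
    (hp : ∀ n, MeasurableSet {x | p n x}) (h : ∀ᵐ x ∂μ, ∀ᶠ n in atTop, p n x) {δ : ℝ≥0∞}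
    (hδ : 0 < δ) : ∃ N, μ {x | ∀ n ≥ N, p n x}ᶜ < δ := by
  have hanti : Antitone fun N => {x | ∀ n ≥ N, p n x}ᶜ := fun N N' hNN' =>
    Set.compl_subset_compl.2 fun x hx n hn => hx n (hNN'.trans hn)
  have hnull : μ (⋂ N, {x | ∀ n ≥ N, p n x}ᶜ) = 0 := by
    refine measure_mono_null (fun x hx => ?_) h
    simp_all [eventually_atTop]
  have := tendsto_measure_iInter_atTop
    (fun N => (MeasurableSet.setOf_forall_ge hp N).compl.nullMeasurableSet) hanti
    ⟨0, measure_ne_top μ _⟩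
  rw [hnull] at this
  exact (this.eventually_lt_const hδ).exists

lemma one_sub_lt_prob_iff [IsProbabilityMeasure μ] {s : Set α} {δ : ℝ≥0∞}
    (hs : MeasurableSet s) (hδ : δ ≤ 1) : 1 - δ < μ s ↔ μ sᶜ < δ := by
  rw [prob_compl_eq_one_sub hs]
  exact (ENNReal.cancel_of_ne (ne_top_of_le_ne_top ENNReal.one_ne_top hδ)).tsub_lt_iff_tsub_lt
    (ENNReal.cancel_of_ne (measure_ne_top μ s)) hδ prob_le_one

end

/-- Let `(X, μ, T)` be ergodic. For `ε > 0` small enough and any measurable `Ω ⊆ X`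
with `μ(Ω) > 1 - ε/4`, there exist a measurable `Ω₀ ⊆ Ω` with `μ(Ω₀) > 1 - ε` and an
integer `n₀` such that for every `x ∈ Ω₀` there is an `ε`-doubling sequence of
integers `{m_i}` (i.e. `|m_i - 2 m_{i-1}| < ε m_i` for all `i ≥ 1`) with `m₀ = n₀`
and `T^{m_i} x ∈ Ω` for all `i ≥ 0`. -/
theorem exists_recurrent_doubling_sequence
    {X : Type*} [MeasurableSpace X] (μ : Measure X) [IsProbabilityMeasure μ]
    (T : X → X) (hT : Ergodic T μ) :
    ∃ ε₀ : ℝ, 0 < ε₀ ∧ ∀ ε : ℝ, 0 < ε → ε ≤ ε₀ →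
      ∀ Ω : Set X, MeasurableSet Ω → 1 - ENNReal.ofReal (ε / 4) < μ Ω →
        ∃ Ω₀ : Set X, MeasurableSet Ω₀ ∧ Ω₀ ⊆ Ω ∧ 1 - ENNReal.ofReal ε < μ Ω₀ ∧
          ∃ n₀ : ℕ, ∀ x ∈ Ω₀, ∃ mseq : ℕ → ℕ, mseq 0 = n₀ ∧
            (∀ i, 1 ≤ i → |(mseq i : ℝ) - 2 * (mseq (i - 1) : ℝ)| < ε * (mseq i : ℝ)) ∧
            (∀ i, T^[mseq i] x ∈ Ω) := by
  refine ⟨1 / 2, by norm_num, fun ε hε hε₀ Ω hΩ hμΩ => ?_⟩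
  have hε1 : ENNReal.ofReal ε ≤ 1 := ENNReal.ofReal_le_one.2 (by linarith)
  rw [one_sub_lt_prob_iff hΩ (ENNReal.ofReal_le_one.2 (by linarith))] at hμΩ
  set φ := Ωᶜ.indicator (1 : X → ℝ)
  have hdens : ∀ᵐ x ∂μ, ∀ᶠ n in atTop, birkhoffSum T φ n x ≤ ε / 3 * n := by
    refine hT.ae_eventually_birkhoffSum_le ((integrable_const 1).indicator hΩ.compl) ?_
    rw [integral_indicator_one hΩ.compl, measureReal_def]
    linarith [(ENNReal.lt_ofReal_iff_toReal_lt (measure_ne_top μ _)).1 hμΩ]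
  have hφ : ∀ n, MeasurableSet {x | birkhoffSum T φ n x ≤ ε / 3 * n} := fun n =>
    measurableSet_le (hT.measurable.birkhoffSum (measurable_const.indicator hΩ.compl) n)
      measurable_const
  obtain ⟨N, hN⟩ := exists_measure_compl_setOf_forall_ge_lt hφ hdens
    (ENNReal.ofReal_pos.2 (by positivity : 0 < ε / 4))
  set G := {x | ∀ n ≥ N, birkhoffSum T φ n x ≤ ε / 3 * n}
  set n₀ := max N 1
  have hΩ₀ : MeasurableSet (Ω ∩ G ∩ T^[n₀] ⁻¹' Ω) :=
    (hΩ.inter (.setOf_forall_ge hφ N)).inter (hT.measurable.iterate n₀ hΩ)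
  refine ⟨_, hΩ₀, fun x hx => hx.1.1, (one_sub_lt_prob_iff hΩ₀ hε1).2 ?_, n₀, ?_⟩
  · calc μ (Ω ∩ G ∩ T^[n₀] ⁻¹' Ω)ᶜ ≤ μ Ωᶜ + μ Gᶜ + μ (T^[n₀] ⁻¹' Ωᶜ) := by
          rw [Set.compl_inter, Set.compl_inter, ← Set.preimage_compl]
          exact (measure_union_le _ _).trans (add_le_add_left (measure_union_le _ _) _)
      _ < ENNReal.ofReal (ε / 4) + ENNReal.ofReal (ε / 4) + ENNReal.ofReal (ε / 4) := by
          rw [(hT.toMeasurePreserving.iterate n₀).measure_preimage hΩ.compl.nullMeasurableSet]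
          exact ENNReal.add_lt_add (ENNReal.add_lt_add hμΩ hN) hμΩ
      _ ≤ ENNReal.ofReal ε := by
          rw [← ENNReal.ofReal_add (by positivity) (by positivity),
            ← ENNReal.ofReal_add (by positivity) (by positivity)]
          exact ENNReal.ofReal_le_ofReal (by linarith)
  · rintro x ⟨⟨-, hxG⟩, hx₀⟩
    obtain ⟨u, hu0, hu, hΩu⟩ := exists_doubling_seq_iterate_mem hε
      (by nlinarith : ε / 3 * (2 + ε) < ε) hxG (le_max_left N 1) (by omega) hx₀
    refine ⟨u, hu0, fun i hi => ?_, hΩu⟩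
    obtain ⟨j, rfl⟩ := Nat.exists_eq_add_of_le' hi
    simpa using hu j
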